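/- Let s > 0, let φ₁ : ℝ → ℝ be measurable, and let φ₂ ∈ L²(ℝ;ℂ) ∩ L^∞(ℝ;ℂ). Then the function x ↦ e^{iφ₁(x)} φ₂(x) satisfies [e^{iφ₁} φ₂]_{s,2} ≤ ‖φ₂‖_{L^∞} · [φ₁]_{s,2} + [φ₂]_{s,2}. -/

import Mathlib

open MeasureTheory Complex ENNReal

/-- The Besov-type seminorm
`[f]_{s,p} = (∫₀^∞ t^{−1−2s} (sup_{|y|≤t} ‖f(·−y) − f‖_{L^p})² dt)^{1/2} ∈ [0,∞]`. -/
noncomputable def besovSeminorm {E : Type*} [NormedAddCommGroup E]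
    (s : ℝ) (p : ℝ≥0∞) (f : ℝ → E) : ℝ≥0∞ :=
  (∫⁻ t in Set.Ioi (0:ℝ),
      ENNReal.ofReal (t ^ (-1 - 2*s)) *
        (⨆ (y : ℝ) (_ : |y| ≤ t), eLpNorm (fun x => f (x - y) - f x) p volume) ^ 2)
    ^ ((1:ℝ)/2)

/-!
Writing `e^{ia}u - e^{ib}v = (e^{ia} - e^{ib})v + e^{ia}(u - v)` and using that `t ↦ e^{it}` is
1-Lipschitz, Hölder and Minkowski bound every translation difference of `e^{iφ₁}φ₂` in `L^p` by
`‖φ₂‖_∞ ‖φ₁(· - y) - φ₁‖_p + ‖φ₂(· - y) - φ₂‖_p`. The seminorm `[f]_{s,p}` is the `L²` norm of the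
translation modulus of `f` against `t^{-1-2s} dt` on `(0, ∞)`, so Minkowski there transfers the
bound.
-/

lemma norm_exp_I_mul_sub_exp_I_mul_le (a b : ℝ) :
    ‖exp (I * a) - exp (I * b)‖ ≤ |a - b| := by
  have h : exp (I * a) - exp (I * b) = exp (I * b) * (exp (I * ↑(a - b)) - 1) := by
    rw [mul_sub, ← exp_add]; push_cast; ring_nf
  rw [h, norm_mul, norm_exp_I_mul_ofReal, one_mul, ← Real.norm_eq_abs]
  exact Real.norm_exp_I_mul_ofReal_sub_one_le

lemma norm_exp_I_mul_mul_sub_le (a b : ℝ) (u v : ℂ) :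
    ‖exp (I * a) * u - exp (I * b) * v‖ ≤ ‖(a - b) • v‖ + ‖u - v‖ :=
  calc ‖exp (I * a) * u - exp (I * b) * v‖
      = ‖(exp (I * a) - exp (I * b)) * v + exp (I * a) * (u - v)‖ := by ring_nf
    _ ≤ |a - b| * ‖v‖ + ‖u - v‖ := by
      grw [norm_add_le, norm_mul, norm_mul, norm_exp_I_mul_ofReal, one_mul,
        norm_exp_I_mul_sub_exp_I_mul_le]
    _ = ‖(a - b) • v‖ + ‖u - v‖ := by rw [norm_smul, Real.norm_eq_abs]

lemma eLpNorm_exp_I_mul_mul_sub_le {α : Type*} [MeasurableSpace α] {μ : Measure α}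
    {p : ℝ≥0∞} (hp : 1 ≤ p) {a b : α → ℝ} {u v : α → ℂ}
    (hab : AEStronglyMeasurable (fun x => a x - b x) μ) (hv : AEStronglyMeasurable v μ)
    (huv : AEStronglyMeasurable (fun x => u x - v x) μ) :
    eLpNorm (fun x => exp (I * a x) * u x - exp (I * b x) * v x) p μ
      ≤ eLpNorm v ⊤ μ * eLpNorm (fun x => a x - b x) p μ
        + eLpNorm (fun x => u x - v x) p μ :=
  calc eLpNorm (fun x => exp (I * a x) * u x - exp (I * b x) * v x) p μ
      ≤ eLpNorm (fun x => ‖(a x - b x) • v x‖ + ‖u x - v x‖) p μ :=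
        eLpNorm_mono_real fun x => norm_exp_I_mul_mul_sub_le _ _ _ _
    _ ≤ eLpNorm (fun x => (a x - b x) • v x) p μ + eLpNorm (fun x => u x - v x) p μ :=
        (eLpNorm_add_le (hab.smul hv).norm huv.norm hp).trans_eq
          (congrArg₂ (· + ·) (eLpNorm_norm _) (eLpNorm_norm _))
    _ ≤ eLpNorm v ⊤ μ * eLpNorm (fun x => a x - b x) p μ
          + eLpNorm (fun x => u x - v x) p μ := by
        rw [mul_comm]
        exact add_le_add_left (eLpNorm_smul_le_eLpNorm_mul_eLpNorm_top p v hab) _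

noncomputable def translationModulus {E : Type*} [NormedAddCommGroup E]
    (p : ℝ≥0∞) (f : ℝ → E) (t : ℝ) : ℝ≥0∞ :=
  ⨆ (y : ℝ) (_ : |y| ≤ t), eLpNorm (fun x => f (x - y) - f x) p volume

noncomputable def besovMeasure (s : ℝ) : Measure ℝ :=
  (volume.restrict (Set.Ioi 0)).withDensity fun t => ENNReal.ofReal (t ^ (-1 - 2 * s))

section TranslationModulus

variable {E : Type*} [NormedAddCommGroup E] (p : ℝ≥0∞)

lemma le_translationModulus (f : ℝ → E) {y t : ℝ} (hy : |y| ≤ t) :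
    eLpNorm (fun x => f (x - y) - f x) p volume ≤ translationModulus p f t :=
  le_iSup₂ (f := fun y (_ : |y| ≤ t) => eLpNorm (fun x => f (x - y) - f x) p volume) y hy

lemma monotone_translationModulus (f : ℝ → E) : Monotone (translationModulus p f) :=
  fun _ _ hst => biSup_mono fun _ hy => hy.trans hst

lemma besovSeminorm_eq_eLpNorm (s : ℝ) (f : ℝ → E) :
    besovSeminorm s p f = eLpNorm (translationModulus p f) 2 (besovMeasure s) := by
  rw [eLpNorm_eq_lintegral_rpow_enorm_toReal two_ne_zero ofNat_ne_top, besovMeasure,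
    lintegral_withDensity_eq_lintegral_mul_non_measurable _ (by fun_prop)
      (.of_forall fun _ => ofReal_lt_top)]
  simp [besovSeminorm, translationModulus]

lemma besovSeminorm_le_mul_add_of_eLpNorm_le {F G : Type*} [NormedAddCommGroup F]
    [NormedAddCommGroup G] (s : ℝ) {f : ℝ → E} {g : ℝ → F} {h : ℝ → G} (c : ℝ≥0∞)
    (hfgh : ∀ y, eLpNorm (fun x => f (x - y) - f x) p volume
      ≤ c * eLpNorm (fun x => g (x - y) - g x) p volume
        + eLpNorm (fun x => h (x - y) - h x) p volume) :
    besovSeminorm s p f ≤ c * besovSeminorm s p g + besovSeminorm s p h := by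
  have hmod (t : ℝ) :
      translationModulus p f t ≤ c * translationModulus p g t + translationModulus p h t :=
    iSup₂_le fun y hy => (hfgh y).trans <| by
      gcongr <;> exact le_translationModulus p _ hy
  have hg := (monotone_translationModulus p g).measurable
  have hh := (monotone_translationModulus p h).measurable
  simp only [besovSeminorm_eq_eLpNorm]
  calc eLpNorm (translationModulus p f) 2 (besovMeasure s)
      ≤ eLpNorm (fun t => c * translationModulus p g t + translationModulus p h t) 2
          (besovMeasure s) := eLpNorm_mono_enorm fun t => hmod t
    _ ≤ eLpNorm (fun t => c * translationModulus p g t) 2 (besovMeasure s)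
          + eLpNorm (translationModulus p h) 2 (besovMeasure s) :=
        eLpNorm_add_le (hg.const_mul c).aestronglyMeasurable hh.aestronglyMeasurable one_le_two
    _ ≤ _ := by
        gcongr
        exact eLpNorm_le_mul_eLpNorm_of_ae_le_mul'' 2 hg.aestronglyMeasurable
          (.of_forall fun _ => le_rfl)

end TranslationModulus

theorem besov_exp_mul_bound_general (s : ℝ)
    (φ₁ : ℝ → ℝ) (hφ₁ : Measurable φ₁)
    (φ₂ : ℝ → ℂ) (hinf : MemLp φ₂ ⊤ volume) :
    besovSeminorm s 2 (fun x => Complex.exp (Complex.I * (↑(φ₁ x):ℂ)) * φ₂ x)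
      ≤ eLpNorm φ₂ ⊤ volume * besovSeminorm s 2 φ₁ + besovSeminorm s 2 φ₂ := by
  refine besovSeminorm_le_mul_add_of_eLpNorm_le 2 s _ fun y => ?_
  have hy := measurePreserving_sub_right volume y
  exact eLpNorm_exp_I_mul_mul_sub_le one_le_two
    ((hφ₁.comp hy.measurable).sub hφ₁).aestronglyMeasurable hinf.1
    ((hinf.1.comp_measurePreserving hy).sub hinf.1)

/-- `[e^{iφ₁} φ₂]_{s,2} ≤ ‖φ₂‖_{L^∞} [φ₁]_{s,2} + [φ₂]_{s,2}`. -/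
theorem besov_exp_mul_bound (s : ℝ) (hs : 0 < s)
    (φ₁ : ℝ → ℝ) (hφ₁ : Measurable φ₁)
    (φ₂ : ℝ → ℂ) (h2 : MemLp φ₂ 2 volume) (hinf : MemLp φ₂ ⊤ volume) :
    besovSeminorm s 2 (fun x => Complex.exp (Complex.I * (↑(φ₁ x):ℂ)) * φ₂ x)
      ≤ eLpNorm φ₂ ⊤ volume * besovSeminorm s 2 φ₁ + besovSeminorm s 2 φ₂ :=
  besov_exp_mul_bound_general s φ₁ hφ₁ φ₂ hinf
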